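/- arXiv:1606.01338 — 2 statements merged into one kernel-verified Lean document; each statement's English description precedes it below -/
import Mathlib

section
/- Abel summation bound: let X be a normed space, let v_k, ..., v_m ∈ X, let A_k, ..., A_m be bounded operators with ‖A_j‖ ≤ M₁, and set E_ℓ = τ Σ_{n=k}^ℓ ‖v_n‖^p for τ > 0, p ≥ 1, with E_{k-1} = 0. Then τ Σ_{n=k}^m ‖(A_m - A_n) v_n‖^p ≤ p(2M₁)^{p-1} Σ_{n=k}^{m-1} ‖A_{n+1} - A_n‖ · E_n, where ‖·‖ on operators denotes the operator norm. -/
open Finset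

private lemma abel_identity (k : ℕ) (c e : ℕ → ℝ) :
    ∀ m, k ≤ m → ∑ n ∈ Icc k m, c n * e n
      = (∑ n ∈ Ico k m, (c n - c (n+1)) * ∑ i ∈ Icc k n, e i)
        + c m * ∑ i ∈ Icc k m, e i := by
  intro m
  induction m with
  | zero =>
    intro hk
    interval_cases k
    simp
  | succ m ih =>
    intro hm
    rcases Nat.lt_or_ge k (m+1) with h | h
    · have hk : k ≤ m := Nat.lt_succ_iff.mp h
      rw [Finset.sum_Icc_succ_top (by omega), Finset.sum_Ico_succ_top (by omega),
        ih hk, Finset.sum_Icc_succ_top (by omega : k ≤ m + 1)]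
      ring
    · have hkeq : k = m + 1 := le_antisymm hm h
      subst hkeq
      simp

private lemma rpow_lip {p C : ℝ} (hp : 1 ≤ p) {a b : ℝ}
    (ha : 0 ≤ a) (haC : a ≤ C) (hb : 0 ≤ b) :
    a ^ p - b ^ p ≤ p * C ^ (p - 1) * |a - b| := by
  have hp0 : 0 < p := lt_of_lt_of_le one_pos hp
  have hC : 0 ≤ C := ha.trans haC
  have hRHS : 0 ≤ p * C ^ (p - 1) * |a - b| := by positivity
  rcases le_or_gt a b with h | h
  · have : a ^ p ≤ b ^ p := Real.rpow_le_rpow ha h hp0.le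
    linarith
  · -- b < a, use MVT
    obtain ⟨ξ, hξ, hξeq⟩ := exists_hasDerivAt_eq_slope (fun x => x ^ p)
      (fun x => p * x ^ (p - 1)) h
      (fun x hx => (Real.continuousAt_rpow_const x p (Or.inr hp0.le)).continuousWithinAt)
      (fun x hx => Real.hasDerivAt_rpow_const (Or.inr hp))
    have hξ0 : 0 ≤ ξ := le_of_lt (lt_of_le_of_lt hb hξ.1)
    have hξC : ξ ≤ C := le_trans hξ.2.le haC
    have hmono : ξ ^ (p - 1) ≤ C ^ (p - 1) :=
      Real.rpow_le_rpow hξ0 hξC (by linarith)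
    have hne : a - b ≠ 0 := by linarith
    have key : a ^ p - b ^ p = p * ξ ^ (p - 1) * (a - b) := by
      field_simp at hξeq
      linarith [hξeq]
    rw [key]
    have h1 : a - b ≤ |a - b| := le_abs_self _
    have h2 : p * ξ ^ (p - 1) * (a - b) ≤ p * C ^ (p - 1) * (a - b) := by
      have hab : 0 ≤ a - b := by linarith
      have := mul_le_mul_of_nonneg_right (mul_le_mul_of_nonneg_left hmono hp0.le) hab
      linarith
    have h3 : p * C ^ (p - 1) * (a - b) ≤ p * C ^ (p - 1) * |a - b| := by
      have : 0 ≤ p * C ^ (p - 1) := by positivity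
      exact mul_le_mul_of_nonneg_left h1 this
    linarith

/-- Abel summation bound: with `E_ℓ = τ ∑_{n=k}^ℓ ‖v_n‖^p` and `‖A_j‖ ≤ M₁`,
`τ ∑_{n=k}^m ‖(A_m - A_n) v_n‖^p ≤ p (2M₁)^{p-1} ∑_{n=k}^{m-1} ‖A_{n+1} - A_n‖ E_n`. -/
theorem abel_summation_bound {D X : Type*} [NormedAddCommGroup D] [NormedSpace ℂ D]
    [NormedAddCommGroup X] [NormedSpace ℂ X]
    (k m : ℕ) (hkm : k ≤ m) (τ p M₁ : ℝ) (hτ : 0 < τ) (hp : 1 ≤ p) (hM : 0 < M₁)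
    (A : ℕ → D →L[ℂ] X) (hA : ∀ j, j ≤ m → ‖A j‖ ≤ M₁)
    (v : ℕ → D) (E : ℕ → ℝ)
    (hE : ∀ ℓ : ℕ, E ℓ = τ * ∑ n ∈ Finset.Icc k ℓ, ‖v n‖ ^ p) :
    τ * ∑ n ∈ Finset.Icc k m, ‖(A m - A n) (v n)‖ ^ p
      ≤ p * (2 * M₁) ^ (p - 1) * ∑ n ∈ Finset.Ico k m, ‖A (n + 1) - A n‖ * E n := by
  have hp0 : 0 < p := lt_of_lt_of_le one_pos hp
  set c : ℕ → ℝ := fun n => ‖A m - A n‖ ^ p with hc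
  set e : ℕ → ℝ := fun n => τ * ‖v n‖ ^ p with he
  have hEe : ∀ ℓ, E ℓ = ∑ i ∈ Icc k ℓ, e i := by
    intro ℓ; rw [hE ℓ, Finset.mul_sum]
  have hEnonneg : ∀ ℓ, 0 ≤ E ℓ := by
    intro ℓ; rw [hEe ℓ]
    exact Finset.sum_nonneg fun i _ => by positivity
  -- Step 1
  have step1 : τ * ∑ n ∈ Icc k m, ‖(A m - A n) (v n)‖ ^ p
      ≤ ∑ n ∈ Icc k m, c n * e n := by
    rw [Finset.mul_sum]
    apply Finset.sum_le_sum
    intro n _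
    have h1 : ‖(A m - A n) (v n)‖ ≤ ‖A m - A n‖ * ‖v n‖ :=
      (A m - A n).le_opNorm (v n)
    have h2 : ‖(A m - A n) (v n)‖ ^ p ≤ (‖A m - A n‖ * ‖v n‖) ^ p :=
      Real.rpow_le_rpow (norm_nonneg _) h1 hp0.le
    rw [Real.mul_rpow (norm_nonneg _) (norm_nonneg _)] at h2
    calc τ * ‖(A m - A n) (v n)‖ ^ p ≤ τ * (‖A m - A n‖ ^ p * ‖v n‖ ^ p) :=
          mul_le_mul_of_nonneg_left h2 hτ.le
      _ = c n * e n := by simp only [hc, he]; ring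
  -- Step 2: Abel identity with c m = 0
  have hcm : c m = 0 := by
    simp only [hc, sub_self, norm_zero]
    exact Real.zero_rpow (by positivity)
  have step2 : ∑ n ∈ Icc k m, c n * e n
      = ∑ n ∈ Ico k m, (c n - c (n+1)) * E n := by
    rw [abel_identity k c e m hkm, hcm, zero_mul, add_zero]
    exact Finset.sum_congr rfl fun n _ => by rw [hEe n]
  -- Step 3: termwise bound
  have step3 : ∑ n ∈ Ico k m, (c n - c (n+1)) * E n
      ≤ ∑ n ∈ Ico k m, p * (2 * M₁) ^ (p - 1) * (‖A (n + 1) - A n‖ * E n) := by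
    apply Finset.sum_le_sum
    intro n hn
    rw [Finset.mem_Ico] at hn
    have hnm : n ≤ m := hn.2.le
    have hn1m : n + 1 ≤ m := hn.2
    have ha : ‖A m - A n‖ ≤ 2 * M₁ := by
      calc ‖A m - A n‖ ≤ ‖A m‖ + ‖A n‖ := norm_sub_le _ _
        _ ≤ M₁ + M₁ := add_le_add (hA m le_rfl) (hA n hnm)
        _ = 2 * M₁ := by ring
    have hlip : c n - c (n+1) ≤ p * (2 * M₁) ^ (p - 1) * ‖A (n + 1) - A n‖ := by
      have h1 : c n - c (n+1) ≤ p * (2 * M₁) ^ (p - 1)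
          * |‖A m - A n‖ - ‖A m - A (n+1)‖| :=
        rpow_lip hp (norm_nonneg _) ha (norm_nonneg _)
      have h2 : |‖A m - A n‖ - ‖A m - A (n+1)‖| ≤ ‖A (n + 1) - A n‖ := by
        have := abs_norm_sub_norm_le (A m - A n) (A m - A (n+1))
        have heq : (A m - A n) - (A m - A (n+1)) = A (n+1) - A n := by abel
        rwa [heq] at this
      calc c n - c (n+1) ≤ p * (2 * M₁) ^ (p - 1)
            * |‖A m - A n‖ - ‖A m - A (n+1)‖| := h1
        _ ≤ p * (2 * M₁) ^ (p - 1) * ‖A (n + 1) - A n‖ :=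
            mul_le_mul_of_nonneg_left h2 (by positivity)
    calc (c n - c (n+1)) * E n
        ≤ (p * (2 * M₁) ^ (p - 1) * ‖A (n + 1) - A n‖) * E n :=
          mul_le_mul_of_nonneg_right hlip (hEnonneg n)
      _ = p * (2 * M₁) ^ (p - 1) * (‖A (n + 1) - A n‖ * E n) := by ring
  calc τ * ∑ n ∈ Icc k m, ‖(A m - A n) (v n)‖ ^ p
      ≤ ∑ n ∈ Icc k m, c n * e n := step1
    _ = ∑ n ∈ Ico k m, (c n - c (n+1)) * E n := step2
    _ ≤ ∑ n ∈ Ico k m, p * (2 * M₁) ^ (p - 1) * (‖A (n + 1) - A n‖ * E n) := step3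
    _ = p * (2 * M₁) ^ (p - 1) * ∑ n ∈ Ico k m, ‖A (n + 1) - A n‖ * E n := by
        rw [Finset.mul_sum]
end

section
/- Resolvent estimate: let H be a complex Hilbert space, A : D(A) → H linear with |⟨Av, v⟩| ≤ λ Re⟨Av, v⟩ for all v ∈ D(A), λ ≥ 1. Let 0 < φ < arcsin(1/λ) and z ∈ ℂ \ {0} with |arg z| ≤ π/2 + φ. If w ∈ D(A) and v ∈ H satisfy (z + A)w = z v, then ‖w‖ ≤ (1/λ + 1)/(1/λ - sin φ) · ‖v‖. -/
/-!
Pair the relation `z w + A w = z v` with `w`. Since `⟨A w, w⟩ = z̄ (⟨v, w⟩ - ‖w‖²)`, its modulus is at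
least `|z| (‖w‖² - ‖v‖ ‖w‖)`, while its real part is at most `|z| ‖v‖ ‖w‖ - Re z ‖w‖²`. The sector
condition compares the two, and `Re z ≥ -sin φ |z|` for `|arg z| ≤ π/2 + φ` turns the result into
`(1 - λ sin φ) ‖w‖² ≤ (1 + λ) ‖v‖ ‖w‖`.
-/

open Real

theorem Complex.neg_sin_mul_norm_le_re {z : ℂ} (hz : z ≠ 0) {φ : ℝ} (hφ : φ ≤ π / 2)
    (harg : |z.arg| ≤ π / 2 + φ) : -Real.sin φ * ‖z‖ ≤ z.re := by
  have hcos : Real.cos (π / 2 + φ) ≤ Real.cos |z.arg| :=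
    Real.cos_le_cos_of_nonneg_of_le_pi (abs_nonneg _) (by linarith) harg
  rw [Real.cos_abs, Complex.cos_arg hz, add_comm, Real.cos_add_pi_div_two,
    le_div_iff₀ (norm_pos_iff.mpr hz)] at hcos
  exact hcos

section InnerProductSpace

variable {E : Type*} [NormedAddCommGroup E] [InnerProductSpace ℂ E]

theorem inner_eq_conj_mul_of_smul_add_eq_smul {z : ℂ} {x y v : E} (h : z • x + y = z • v) :
    inner ℂ y x = starRingEnd ℂ z * (inner ℂ v x - (‖x‖ : ℂ) ^ 2) := by
  rw [eq_sub_of_add_eq' h, inner_sub_left, inner_smul_left, inner_smul_left,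
    inner_self_eq_norm_sq_to_K, mul_sub]
  rfl

theorem norm_mul_sub_le_norm_inner_of_smul_add_eq_smul {z : ℂ} {x y v : E}
    (h : z • x + y = z • v) : ‖z‖ * (‖x‖ ^ 2 - ‖v‖ * ‖x‖) ≤ ‖inner ℂ y x‖ := by
  rw [inner_eq_conj_mul_of_smul_add_eq_smul h, norm_mul, Complex.norm_conj]
  gcongr
  calc ‖x‖ ^ 2 - ‖v‖ * ‖x‖ ≤ ‖(‖x‖ : ℂ) ^ 2‖ - ‖inner ℂ v x‖ := by
        gcongr
        · simp
        · exact norm_inner_le_norm v x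
    _ ≤ ‖inner ℂ v x - (‖x‖ : ℂ) ^ 2‖ := by
        rw [norm_sub_rev]
        exact norm_sub_norm_le _ _

theorem re_inner_le_of_smul_add_eq_smul {z : ℂ} {x y v : E} (h : z • x + y = z • v) :
    (inner ℂ y x).re ≤ ‖z‖ * (‖v‖ * ‖x‖) - z.re * ‖x‖ ^ 2 := by
  have hre : (inner ℂ y x).re = (starRingEnd ℂ z * inner ℂ v x).re - z.re * ‖x‖ ^ 2 := by
    rw [inner_eq_conj_mul_of_smul_add_eq_smul h, mul_sub, Complex.sub_re, ← Complex.ofReal_pow,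
      Complex.re_mul_ofReal, Complex.conj_re]
  calc (inner ℂ y x).re = (starRingEnd ℂ z * inner ℂ v x).re - z.re * ‖x‖ ^ 2 := hre
    _ ≤ ‖starRingEnd ℂ z * inner ℂ v x‖ - z.re * ‖x‖ ^ 2 := by
        gcongr
        exact Complex.re_le_norm _
    _ ≤ ‖z‖ * (‖v‖ * ‖x‖) - z.re * ‖x‖ ^ 2 := by
        rw [norm_mul, Complex.norm_conj]
        gcongr
        exact norm_inner_le_norm v x

theorem norm_le_of_smul_add_eq_smul_of_sector {lam s : ℝ} (hlam : 0 < lam) (hs : s < 1 / lam)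
    {z : ℂ} (hz : z ≠ 0) (hre : -s * ‖z‖ ≤ z.re) {x y v : E}
    (hsector : ‖inner ℂ y x‖ ≤ lam * (inner ℂ y x).re) (h : z • x + y = z • v) :
    ‖x‖ ≤ (1 / lam + 1) / (1 / lam - s) * ‖v‖ := by
  have hz' : 0 < ‖z‖ := norm_pos_iff.mpr hz
  have hls : 0 < 1 - lam * s := by
    rw [lt_div_iff₀ hlam] at hs
    linarith
  have hquad : (1 - lam * s) * ‖x‖ ^ 2 ≤ (1 + lam) * (‖v‖ * ‖x‖) := by
    have hmod : ‖z‖ * (‖x‖ ^ 2 - ‖v‖ * ‖x‖) ≤ lam * (‖z‖ * (‖v‖ * ‖x‖) - z.re * ‖x‖ ^ 2) :=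
      (norm_mul_sub_le_norm_inner_of_smul_add_eq_smul h).trans <| hsector.trans <|
        mul_le_mul_of_nonneg_left (re_inner_le_of_smul_add_eq_smul h) hlam.le
    have hsin : lam * (-z.re * ‖x‖ ^ 2) ≤ lam * (s * ‖z‖ * ‖x‖ ^ 2) := by
      gcongr
      linarith
    refine le_of_mul_le_mul_left ?_ hz'
    linear_combination hmod + hsin
  have hlin : (1 - lam * s) * ‖x‖ ≤ (1 + lam) * ‖v‖ := by
    rcases (norm_nonneg x).eq_or_lt with hx | hx
    · rw [← hx, mul_zero]
      exact mul_nonneg (by linarith) (norm_nonneg v)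
    · exact le_of_mul_le_mul_right (by linear_combination hquad) hx
  rw [div_mul_eq_mul_div, le_div_iff₀ (by linarith)]
  field_simp
  linarith

end InnerProductSpace

/-- Resolvent estimate: under the sector bound `|⟨Av,v⟩| ≤ λ Re⟨Av,v⟩`, for
`0 < φ < arcsin(1/λ)` and `z ≠ 0` with `|arg z| ≤ π/2 + φ`, the relation
`(z + A) w = z v` implies `‖w‖ ≤ (1/λ + 1)/(1/λ - sin φ) ‖v‖`. -/
theorem resolvent_estimate {H : Type*} [NormedAddCommGroup H] [InnerProductSpace ℂ H]
    (Dom : Submodule ℂ H) (A : Dom →ₗ[ℂ] H) (lam φ : ℝ) (hlam : 1 ≤ lam)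
    (hA : ∀ v : Dom, ‖(inner ℂ (A v) (v : H) : ℂ)‖ ≤ lam * (inner ℂ (A v) (v : H) : ℂ).re)
    (hφ0 : 0 < φ) (hφ : φ < Real.arcsin (1 / lam))
    (z : ℂ) (hz : z ≠ 0) (harg : |z.arg| ≤ Real.pi / 2 + φ)
    (w : Dom) (v : H) (heq : z • (w : H) + A w = z • v) :
    ‖(w : H)‖ ≤ (1 / lam + 1) / (1 / lam - Real.sin φ) * ‖v‖ := by
  have hφ_lt : φ < π / 2 := hφ.trans_le (arcsin_le_pi_div_two _)
  have hsin : sin φ < 1 / lam :=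
    (lt_arcsin_iff_sin_lt' ⟨by linarith [pi_pos], hφ_lt⟩).mp hφ
  exact norm_le_of_smul_add_eq_smul_of_sector (by linarith) hsin hz
    (Complex.neg_sin_mul_norm_le_re hz hφ_lt.le harg) (hA w) heq
end
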